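/- Let c be a clause of the CNF formula F that is superredundant in F, let x be a variable such that c contains neither the literal x nor the literal ¬x, and suppose F does not contain the clause c ∪ {¬x}. Then c is superredundant in F[true/x]. Symmetrically, if F does not contain the clause c ∪ {x}, then c is superredundant in F[false/x]. -/
import Mathlib


/-- A literal is a propositional variable (indexed by ℕ) with a sign. -/
abbrev Lit : Type := ℕ × Bool

/-- The complementary literal. -/
def negLit (l : Lit) : Lit := (l.1, !l.2)

/-- A clause is a finite set of literals. -/
abbrev Clause : Type := Finset Lit

/-- A clause is non-tautological: it contains no literal together with its complement. -/
def NonTauto (c : Clause) : Prop := ∀ l ∈ c, negLit l ∉ c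

/-- A CNF formula is a finite set of non-tautological clauses. -/
def IsCNF (F : Finset Clause) : Prop := ∀ c ∈ F, NonTauto c

/-- `Resolvent C D E`: the clauses `C = c₁ ∪ {x}` and `D = c₂ ∪ {¬x}` resolve on the
variable `x` into `E = c₁ ∪ c₂`, all three clauses being non-tautological. -/
def Resolvent (C D E : Clause) : Prop :=
  ∃ (x : ℕ) (c₁ c₂ : Clause),
    (x, true) ∉ c₁ ∧ (x, false) ∉ c₂ ∧
    NonTauto (insert (x, true) c₁) ∧ NonTauto (insert (x, false) c₂) ∧
    NonTauto (c₁ ∪ c₂) ∧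
    C = insert (x, true) c₁ ∧ D = insert (x, false) c₂ ∧ E = c₁ ∪ c₂

/-- The resolution closure of a formula: the smallest set of clauses containing `F`
and closed under resolution. -/
inductive ResCn (F : Finset Clause) : Clause → Prop
  | base {c : Clause} : c ∈ F → ResCn F c
  | step {C D E : Clause} : ResCn F C → ResCn F D → Resolvent C D E → ResCn F E

/-- A valuation satisfies a clause if it makes some literal of it true. -/
def satClause (v : ℕ → Bool) (c : Clause) : Prop := ∃ l ∈ c, v l.1 = l.2

/-- A valuation satisfies a set of clauses if it satisfies every clause in it. -/
def satSet (v : ℕ → Bool) (G : Set Clause) : Prop := ∀ c ∈ G, satClause v c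

/-- A set of clauses entails a clause: every valuation satisfying the set satisfies
the clause. -/
def entailsC (G : Set Clause) (c : Clause) : Prop :=
  ∀ v : ℕ → Bool, satSet v G → satClause v c

/-- A formula entails a formula. -/
def entailsF (F G : Finset Clause) : Prop :=
  ∀ v : ℕ → Bool, satSet v (↑F : Set Clause) → satSet v (↑G : Set Clause)

/-- Two formulae are equivalent if they are satisfied by the same valuations. -/
def equivF (F G : Finset Clause) : Prop :=
  ∀ v : ℕ → Bool, satSet v (↑F : Set Clause) ↔ satSet v (↑G : Set Clause)

/-- A clause `c` of `F` is superredundant in `F` if `ResCn(F) \ {c} ⊨ c`. -/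
def SuperRedundant (F : Finset Clause) (c : Clause) : Prop :=
  entailsC ({d | ResCn F d} \ {c}) c

/-- The size of a formula: the total number of literal occurrences in it. -/
def size (F : Finset Clause) : ℕ := ∑ c ∈ F, c.card

/-- The set of variables occurring (positively or negatively) in a formula. -/
def varsF (F : Finset Clause) : Set ℕ := {n | ∃ c ∈ F, ∃ b : Bool, (n, b) ∈ c}

/-- `F[true/x]`: delete every clause containing the literal `x`, remove `¬x` from the
remaining clauses. -/
def substTrue (F : Finset Clause) (x : ℕ) : Finset Clause :=
  (F.filter (fun c => (x, true) ∉ c)).image (fun c => c.erase (x, false))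

/-- `F[false/x]`: delete every clause containing the literal `¬x`, remove `x` from the
remaining clauses. -/
def substFalse (F : Finset Clause) (x : ℕ) : Finset Clause :=
  (F.filter (fun c => (x, false) ∉ c)).image (fun c => c.erase (x, true))

lemma nonTauto_subset {d e : Clause} (h : d ⊆ e) (he : NonTauto e) : NonTauto d :=
  fun l hl hn => he l (h hl) (h hn)

lemma resCn_nonTauto {G : Finset Clause} (hG : IsCNF G) {d : Clause} (h : ResCn G d) :
    NonTauto d := by
  induction h with
  | base h => exact hG _ h
  | step _ _ hR _ _ =>
    obtain ⟨x, c₁, c₂, _, _, _, _, hT3, _, _, rfl⟩ := hR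
    exact hT3

lemma sat_resolvent {v : ℕ → Bool} {C D E : Clause} (hR : Resolvent C D E)
    (hC : satClause v C) (hD : satClause v D) : satClause v E := by
  obtain ⟨x, c₁, c₂, _, _, _, _, _, rfl, rfl, rfl⟩ := hR
  obtain ⟨l, hl, hvl⟩ := hC
  rcases Finset.mem_insert.1 hl with rfl | hl
  · obtain ⟨m, hm, hvm⟩ := hD
    rcases Finset.mem_insert.1 hm with rfl | hm
    · simp only at hvl hvm
      rw [hvl] at hvm
      exact absurd hvm (by simp)
    · exact ⟨m, Finset.mem_union_right _ hm, hvm⟩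
  · exact ⟨l, Finset.mem_union_left _ hl, hvl⟩

lemma mk_resolvent {A B : Clause} {y : ℕ}
    (hA : (y, true) ∈ A) (hB : (y, false) ∈ B)
    (hTA : NonTauto A) (hTB : NonTauto B)
    (hTE : NonTauto (A.erase (y, true) ∪ B.erase (y, false))) :
    Resolvent A B (A.erase (y, true) ∪ B.erase (y, false)) := by
  refine ⟨y, A.erase (y, true), B.erase (y, false),
    Finset.notMem_erase _ _, Finset.notMem_erase _ _, ?_, ?_, hTE,
    (Finset.insert_erase hA).symm, (Finset.insert_erase hB).symm, rfl⟩
  · rw [Finset.insert_erase hA]; exact hTA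
  · rw [Finset.insert_erase hB]; exact hTB

lemma key_lemma (F : Finset Clause) (hF : IsCNF F) (c : Clause) (x : ℕ) (b : Bool)
    (hxnb : (x, !b) ∉ c)
    (hins : insert (x, !b) c ∉ F)
    {d : Clause} (hd : ResCn F d) :
    (x, b) ∉ d →
      SuperRedundant ((F.filter (fun e => (x, b) ∉ e)).image (fun e => e.erase (x, !b))) c ∨
      ∃ d', ResCn ((F.filter (fun e => (x, b) ∉ e)).image (fun e => e.erase (x, !b))) d' ∧
        d' ⊆ d.erase (x, !b) ∧ (d' = c → d = c) := by
  set G := (F.filter (fun e => (x, b) ∉ e)).image (fun e => e.erase (x, !b)) with hG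
  have hGcnf : IsCNF G := by
    intro e he
    rw [hG, Finset.mem_image] at he
    obtain ⟨a, ha, rfl⟩ := he
    exact nonTauto_subset (Finset.erase_subset _ _) (hF a (Finset.mem_filter.1 ha).1)
  induction hd with
  | @base e h =>
    intro hxd
    right
    refine ⟨e.erase (x, !b), ResCn.base ?_, Finset.Subset.refl _, ?_⟩
    · rw [hG, Finset.mem_image]
      exact ⟨e, Finset.mem_filter.2 ⟨h, hxd⟩, rfl⟩
    · intro hec
      by_cases hmem : (x, !b) ∈ e
      · exfalso
        apply hins
        have : insert (x, !b) c = e := by rw [← hec, Finset.insert_erase hmem]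
        rw [this]; exact h
      · rwa [Finset.erase_eq_of_notMem hmem] at hec
  | @step C D E hC hD hR ihC ihD =>
    obtain ⟨y, c₁, c₂, h1, h2, hT1, hT2, hT3, rfl, rfl, rfl⟩ := hR
    intro hxE
    have hyt₂ : (y, true) ∉ c₂ := fun h =>
      hT2 (y, false) (Finset.mem_insert_self _ _) (Finset.mem_insert_of_mem h)
    have hyf₁ : (y, false) ∉ c₁ := fun h =>
      hT1 (y, true) (Finset.mem_insert_self _ _) (Finset.mem_insert_of_mem h)
    by_cases hyx : y = x
    · subst hyx
      cases b with
      | true =>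
        have hxD : ((y : ℕ), true) ∉ insert ((y : ℕ), false) c₂ := by
          intro h
          rcases Finset.mem_insert.1 h with h | h
          · simp at h
          · exact hyt₂ h
        rcases ihD hxD with hSR | ⟨d'', hd'', hsub, himp⟩
        · exact Or.inl hSR
        · right
          refine ⟨d'', hd'', ?_, ?_⟩
          · intro l hl
            have hl' := hsub hl
            rw [Finset.mem_erase] at hl' ⊢
            refine ⟨hl'.1, Finset.mem_union_right _ ?_⟩
            rcases Finset.mem_insert.1 hl'.2 with h | h
            · exact absurd h hl'.1
            · exact h
          · intro h
            exfalso
            apply hxnb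
            rw [← himp h]
            exact Finset.mem_insert_self _ _
      | false =>
        have hxC : ((y : ℕ), false) ∉ insert ((y : ℕ), true) c₁ := by
          intro h
          rcases Finset.mem_insert.1 h with h | h
          · simp at h
          · exact hyf₁ h
        rcases ihC hxC with hSR | ⟨d'', hd'', hsub, himp⟩
        · exact Or.inl hSR
        · right
          refine ⟨d'', hd'', ?_, ?_⟩
          · intro l hl
            have hl' := hsub hl
            rw [Finset.mem_erase] at hl' ⊢
            refine ⟨hl'.1, Finset.mem_union_left _ ?_⟩
            rcases Finset.mem_insert.1 hl'.2 with h | h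
            · exact absurd h hl'.1
            · exact h
          · intro h
            exfalso
            apply hxnb
            rw [← himp h]
            exact Finset.mem_insert_self _ _
    · have hxC : (x, b) ∉ insert (y, true) c₁ := by
        intro h
        rcases Finset.mem_insert.1 h with h | h
        · exact hyx (congrArg Prod.fst h).symm
        · exact hxE (Finset.mem_union_left _ h)
      have hxD : (x, b) ∉ insert (y, false) c₂ := by
        intro h
        rcases Finset.mem_insert.1 h with h | h
        · exact hyx (congrArg Prod.fst h).symm
        · exact hxE (Finset.mem_union_right _ h)
      rcases ihC hxC with hSR | ⟨dC, hdC, hsubC, himpC⟩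
      · exact Or.inl hSR
      rcases ihD hxD with hSR | ⟨dD, hdD, hsubD, himpD⟩
      · exact Or.inl hSR
      have hdCs : ∀ l ∈ dC, l ≠ (y, true) → l ∈ (c₁ ∪ c₂).erase (x, !b) := by
        intro l hl hne
        have h := Finset.mem_erase.1 (hsubC hl)
        rcases Finset.mem_insert.1 h.2 with h' | h'
        · exact absurd h' hne
        · exact Finset.mem_erase.2 ⟨h.1, Finset.mem_union_left _ h'⟩
      have hdDs : ∀ l ∈ dD, l ≠ (y, false) → l ∈ (c₁ ∪ c₂).erase (x, !b) := by
        intro l hl hne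
        have h := Finset.mem_erase.1 (hsubD hl)
        rcases Finset.mem_insert.1 h.2 with h' | h'
        · exact absurd h' hne
        · exact Finset.mem_erase.2 ⟨h.1, Finset.mem_union_right _ h'⟩
      by_cases hyC : (y, true) ∈ dC
      · by_cases hyD : (y, false) ∈ dD
        · set R := dC.erase (y, true) ∪ dD.erase (y, false) with hRdef
          have hRsub : R ⊆ (c₁ ∪ c₂).erase (x, !b) := by
            intro l hl
            rcases Finset.mem_union.1 hl with h | h
            · have h' := Finset.mem_erase.1 h; exact hdCs l h'.2 h'.1
            · have h' := Finset.mem_erase.1 h; exact hdDs l h'.2 h'.1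
          have hRT : NonTauto R :=
            nonTauto_subset (hRsub.trans (Finset.erase_subset _ _)) hT3
          have hres : Resolvent dC dD R :=
            mk_resolvent hyC hyD (resCn_nonTauto hGcnf hdC) (resCn_nonTauto hGcnf hdD) hRT
          have hdR : ResCn G R := ResCn.step hdC hdD hres
          by_cases hRc : R = c
          · left
            have hytR : (y, true) ∉ R := by
              intro hmem
              rcases Finset.mem_union.1 hmem with h' | h'
              · exact (Finset.mem_erase.1 h').1 rfl
              · have h'' := Finset.mem_erase.1 (hsubD (Finset.mem_of_mem_erase h'))
                rcases Finset.mem_insert.1 h''.2 with h''' | h'''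
                · simp at h'''
                · exact hyt₂ h'''
            have hyfR : (y, false) ∉ R := by
              intro hmem
              rcases Finset.mem_union.1 hmem with h' | h'
              · have h'' := Finset.mem_erase.1 (hsubC (Finset.mem_of_mem_erase h'))
                rcases Finset.mem_insert.1 h''.2 with h''' | h'''
                · simp at h'''
                · exact hyf₁ h'''
              · exact (Finset.mem_erase.1 h').1 rfl
            have hdCne : dC ≠ c := by
              intro h
              apply hytR
              rw [hRc, ← h]
              exact hyC
            have hdDne : dD ≠ c := by
              intro h
              apply hyfR
              rw [hRc, ← h]
              exact hyD
            intro v hv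
            have hvC : satClause v dC := hv dC ⟨hdC, hdCne⟩
            have hvD : satClause v dD := hv dD ⟨hdD, hdDne⟩
            have := sat_resolvent hres hvC hvD
            rwa [hRc] at this
          · exact Or.inr ⟨R, hdR, hRsub, fun h => absurd h hRc⟩
        · right
          refine ⟨dD, hdD, fun l hl => hdDs l hl (fun h => hyD (h ▸ hl)), ?_⟩
          intro h
          exfalso
          apply hyD
          rw [h, ← himpD h]
          exact Finset.mem_insert_self _ _
      · right
        refine ⟨dC, hdC, fun l hl => hdCs l hl (fun h => hyC (h ▸ hl)), ?_⟩
        intro h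
        exfalso
        apply hyC
        rw [h, ← himpC h]
        exact Finset.mem_insert_self _ _

lemma main_helper (F : Finset Clause) (hF : IsCNF F) (c : Clause)
    (hsr : SuperRedundant F c) (x : ℕ) (b : Bool)
    (hxb : (x, b) ∉ c) (hxnb : (x, !b) ∉ c)
    (hins : insert (x, !b) c ∉ F) :
    SuperRedundant ((F.filter (fun e => (x, b) ∉ e)).image (fun e => e.erase (x, !b))) c := by
  set G := (F.filter (fun e => (x, b) ∉ e)).image (fun e => e.erase (x, !b)) with hG
  by_cases hSR : SuperRedundant G c
  · exact hSR
  intro v hv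
  set v' : ℕ → Bool := fun n => if n = x then b else v n with hv'
  have hsat : ∀ d : Clause, ResCn F d → d ≠ c → satClause v' d := by
    intro d hd hne
    by_cases hxd : (x, b) ∈ d
    · exact ⟨(x, b), hxd, by simp [hv']⟩
    rcases key_lemma F hF c x b hxnb hins hd hxd with h | ⟨d', hd', hsub, himp⟩
    · exact absurd h hSR
    have hne' : d' ≠ c := fun h => hne (himp h)
    obtain ⟨l, hl, hvl⟩ := hv d' ⟨hd', hne'⟩
    have hld := hsub hl
    have h1 : l ∈ d := Finset.mem_of_mem_erase hld
    have hne1 : l ≠ (x, !b) := (Finset.mem_erase.1 hld).1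
    have hlx : l.1 ≠ x := by
      rcases l with ⟨n, s⟩
      intro h
      dsimp at h
      subst h
      cases s <;> cases b <;> first | exact hxd h1 | exact hne1 rfl
    refine ⟨l, h1, ?_⟩
    show (if l.1 = x then b else v l.1) = l.2
    rw [if_neg hlx]
    exact hvl
  have hc' : satClause v' c := hsr v' (fun d hd => hsat d hd.1 hd.2)
  obtain ⟨l, hl, hvl⟩ := hc'
  have hlx : l.1 ≠ x := by
    rcases l with ⟨n, s⟩
    intro h
    dsimp at h
    subst h
    cases s <;> cases b <;> first | exact hxb hl | exact hxnb hl
  refine ⟨l, hl, ?_⟩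
  rw [← hvl]
  show v l.1 = (if l.1 = x then b else v l.1)
  rw [if_neg hlx]

/-- a superredundant clause `c` of `F` containing neither `x` nor `¬x`
remains superredundant in `F[true/x]` provided `c ∪ {¬x} ∉ F`, and in `F[false/x]`
provided `c ∪ {x} ∉ F`. -/
theorem superredundant_subst
    (F : Finset Clause) (hF : IsCNF F) (c : Clause) (hc : c ∈ F)
    (hsr : SuperRedundant F c) (x : ℕ)
    (hx₁ : (x, true) ∉ c) (hx₂ : (x, false) ∉ c) :
    (insert (x, false) c ∉ F → SuperRedundant (substTrue F x) c) ∧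
    (insert (x, true) c ∉ F → SuperRedundant (substFalse F x) c) := by
  constructor
  · intro h
    exact main_helper F hF c hsr x true hx₁ hx₂ h
  · intro h
    exact main_helper F hF c hsr x false hx₂ hx₁ h
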